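/- arXiv:1608.07498 — 2 statements merged into one kernel-verified Lean document; each statement's English description precedes it below -/
import Mathlib

section
/- If the loss function l satisfies l(x) > x for all sufficiently large |x|, then the interior of the domain of its convex conjugate l* (as a subset of [0,∞)) is nonempty. -/
/-- Under condition (C), the interior of the domain of the convex conjugate `l*`
(as a subset of `[0,∞)`) is nonempty. -/
theorem interior_dom_conj_nonempty (l : ℝ → ℝ)
    (hconv : ConvexOn ℝ Set.univ l) (hmono : Monotone l) (h0 : l 0 = 0)
    (hC : ∃ M : ℝ, ∀ x : ℝ, M ≤ |x| → x < l x) :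
    (interior {z : ℝ | 0 ≤ z ∧ (⨆ x : ℝ, ((x * z - l x : ℝ) : EReal)) < ⊤}).Nonempty := by
  obtain ⟨M, hM⟩ := hC
  set x₁ : ℝ := max M 1 with hx₁def
  set x₀ : ℝ := -x₁ with hx₀def
  have hx₁pos : (1:ℝ) ≤ x₁ := le_max_right _ _
  have hx₀neg : x₀ < 0 := by simp [hx₀def]; linarith
  have hlx₀ : x₀ < l x₀ := hM x₀ (by rw [abs_of_neg hx₀neg]; simp [hx₀def]; exact le_max_left _ _)
  have hlx₀le : l x₀ ≤ 0 := by
    have := hmono (le_of_lt hx₀neg)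
    rwa [h0] at this
  set c : ℝ := l x₀ / x₀ with hcdef
  have hc0 : 0 ≤ c := div_nonneg_iff.mpr (Or.inr ⟨hlx₀le, hx₀neg.le⟩)
  have hc1 : c < 1 := by
    have hcx : c * x₀ = l x₀ := div_mul_cancel₀ _ hx₀neg.ne
    nlinarith
  -- the open interval (c, 1) is contained in the domain
  have hsub : Set.Ioo c 1 ⊆ {z : ℝ | 0 ≤ z ∧ (⨆ x : ℝ, ((x * z - l x : ℝ) : EReal)) < ⊤} := by
    intro z hz
    obtain ⟨hzc, hz1⟩ := hz
    have hz0 : 0 ≤ z := le_trans hc0 hzc.le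
    refine ⟨hz0, ?_⟩
    have hbound : ∀ x : ℝ, x * z - l x ≤ x₁ - l x₀ := by
      intro x
      rcases le_or_gt x x₀ with hx | hx
      · -- x ≤ x₀ < 0 : use convexity
        have hxneg : x < 0 := lt_of_le_of_lt hx hx₀neg
        have ha : 0 ≤ x₀ / x := div_nonneg_iff.mpr (Or.inr ⟨hx₀neg.le, hxneg.le⟩)
        have hxx' : x₀ / x * x = x₀ := div_mul_cancel₀ _ hxneg.ne
        have ha1 : x₀ / x ≤ 1 := by nlinarith
        have hb : 0 ≤ 1 - x₀ / x := by linarith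
        have hkey := hconv.2 (Set.mem_univ x) (Set.mem_univ 0) ha hb (by ring)
        simp only [smul_eq_mul, mul_zero, add_zero, h0, mul_zero] at hkey
        have hxx : x₀ / x * x = x₀ := div_mul_cancel₀ _ hxneg.ne
        rw [hxx] at hkey
        -- hkey : l x₀ ≤ x₀ / x * l x + (1 - x₀/x) * 0 = x₀/x * l x
        have hkey2 : l x₀ ≤ x₀ / x * l x := by linarith
        -- multiply by x / x₀ > 0 : (x/x₀) * l x₀ ≤ l x
        have hxx₀pos : 0 < x / x₀ := div_pos_iff.mpr (Or.inr ⟨hxneg, hx₀neg⟩)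
        have h3 : x / x₀ * l x₀ ≤ l x := by
          have := mul_le_mul_of_nonneg_left hkey2 hxx₀pos.le
          calc x / x₀ * l x₀ ≤ x / x₀ * (x₀ / x * l x) := this
            _ = l x := by field_simp [hxneg.ne, hx₀neg.ne]
        -- x * z - l x ≤ x * z - (x/x₀) l x₀ = x * (z - c) ≤ 0
        have h4 : x * z - l x ≤ x * (z - c) := by
          have : x / x₀ * l x₀ = x * c := by rw [hcdef]; ring
          linarith [h3, this ▸ h3]
        have h5 : x * (z - c) ≤ 0 :=
          mul_nonpos_of_nonpos_of_nonneg hxneg.le (by linarith)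
        have h6 : 0 ≤ x₁ - l x₀ := by linarith
        linarith
      · rcases le_or_gt x x₁ with hx' | hx'
        · -- x₀ ≤ x ≤ x₁
          have h1 : x * z ≤ x₁ := by
            rcases le_or_gt 0 x with hx0 | hx0
            · calc x * z ≤ x * 1 := by nlinarith
                _ = x := mul_one x
                _ ≤ x₁ := hx'
            · nlinarith
          have h2 : l x₀ ≤ l x := hmono hx.le
          linarith
        · -- x > x₁ ≥ 1
          have hxM : x < l x := hM x (by rw [abs_of_pos (by linarith)]; exact le_trans (le_max_left _ _) hx'.le)
          have h1 : x * z ≤ x := by nlinarith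
          have h6 : 0 ≤ x₁ - l x₀ := by linarith
          linarith
    have : (⨆ x : ℝ, ((x * z - l x : ℝ) : EReal)) ≤ ((x₁ - l x₀ : ℝ) : EReal) := by
      apply iSup_le
      intro x
      exact_mod_cast hbound x
    exact lt_of_le_of_lt this (EReal.coe_lt_top _)
  have hmem : (c + 1) / 2 ∈ interior {z : ℝ | 0 ≤ z ∧ (⨆ x : ℝ, ((x * z - l x : ℝ) : EReal)) < ⊤} :=
    interior_maximal hsub isOpen_Ioo ⟨by linarith, by linarith⟩
  exact ⟨_, hmem⟩
end

section
/- The optimized certainty equivalent is real-valued and the infimum in its definition is attained: if l(x) > x for all |x| large enough, then for every bounded random variable X, the function r ↦ E[l(X − r)] + r attains a finite minimum on a compact interval of ℝ. -/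
/-!
The objective `F r = E[l (X - r)] + r` is convex in `r`, hence continuous. By Jensen's inequality
`F r ≥ h (E X - r) + E X` with `h x = l x - x`. The function `h` is convex, vanishes at `0` and is
positive at `±p` for large `p`, so it grows at least linearly in both directions. Hence `F` tends to
`+∞` at `±∞` and attains its minimum.
-/

open MeasureTheory Filter Set

lemma ConvexOn.comp_const_sub {f : ℝ → ℝ} (hf : ConvexOn ℝ univ f) (c : ℝ) :
    ConvexOn ℝ univ (fun r => f (c - r)) := by
  simpa [Function.comp_def, sub_eq_add_neg] using
    hf.comp_affineMap (AffineMap.const ℝ ℝ c - AffineMap.id ℝ ℝ)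

lemma ConvexOn.tendsto_atTop_atTop_of_lt {f : ℝ → ℝ} (hf : ConvexOn ℝ univ f) {a b : ℝ}
    (hab : a < b) (hfab : f a < f b) : Tendsto f atTop atTop := by
  set s := (f b - f a) / (b - a)
  have hs : 0 < s := div_pos (sub_pos.2 hfab) (sub_pos.2 hab)
  have hline : Tendsto (fun y => f a + s * (y - a)) atTop atTop :=
    tendsto_atTop_add_const_left _ _
      ((tendsto_atTop_add_const_right _ _ tendsto_id).const_mul_atTop hs)
  refine tendsto_atTop_mono' _ ?_ hline
  filter_upwards [eventually_ge_atTop b] with y hby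
  have hya : 0 < y - a := by linarith
  have hsecant :=
    hf.secant_mono (mem_univ a) (mem_univ b) (mem_univ y) hab.ne' (sub_pos.1 hya).ne' hby
  rw [le_div_iff₀ hya] at hsecant
  linarith

lemma ConvexOn.tendsto_atBot_atTop_of_lt {f : ℝ → ℝ} (hf : ConvexOn ℝ univ f) {a b : ℝ}
    (hab : a < b) (hfba : f b < f a) : Tendsto f atBot atTop := by
  set s := (f a - f b) / (a - b)
  have hs : s < 0 := div_neg_of_pos_of_neg (sub_pos.2 hfba) (sub_neg.2 hab)
  have hline : Tendsto (fun y => f b + (y - b) * s) atBot atTop :=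
    tendsto_atTop_add_const_left _ _
      ((tendsto_atBot_add_const_right _ _ tendsto_id).atBot_mul_const_of_neg hs)
  refine tendsto_atTop_mono' _ ?_ hline
  filter_upwards [eventually_le_atBot a] with y hya
  have hyb : y - b < 0 := by linarith
  have hsecant :=
    hf.secant_mono (mem_univ b) (mem_univ y) (mem_univ a) (sub_neg.1 hyb).ne hab.ne hya
  rw [div_le_iff_of_neg hyb] at hsecant
  linarith

lemma ConvexOn.tendsto_cocompact_atTop {f : ℝ → ℝ} (hf : ConvexOn ℝ univ f) {x a y : ℝ}
    (hxa : x < a) (hay : a < y) (hfx : f a < f x) (hfy : f a < f y) :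
    Tendsto f (cocompact ℝ) atTop := by
  rw [cocompact_eq_atBot_atTop]
  exact tendsto_sup.2 ⟨hf.tendsto_atBot_atTop_of_lt hxa hfx, hf.tendsto_atTop_atTop_of_lt hay hfy⟩

lemma ConvexOn.tendsto_sub_self_cocompact_atTop {l : ℝ → ℝ} (hconv : ConvexOn ℝ univ l)
    (h0 : l 0 = 0) (hC : ∃ M : ℝ, ∀ x : ℝ, M ≤ |x| → x < l x) :
    Tendsto (fun x => l x - x) (cocompact ℝ) atTop := by
  obtain ⟨M, hM⟩ := hC
  set p := max M 1
  have hp : 0 < p := lt_of_lt_of_le one_pos (le_max_right _ _)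
  have hMp : M ≤ |p| := by rw [abs_of_pos hp]; exact le_max_left _ _
  have hlp := hM p hMp
  have hlnp := hM (-p) (by rwa [abs_neg])
  refine (hconv.sub (concaveOn_id convex_univ)).tendsto_cocompact_atTop (neg_lt_zero.2 hp) hp
    ?_ ?_ <;> simp only [Pi.sub_apply, id, h0] <;> linarith

lemma MeasureTheory.integrable_comp_of_abs_le {Ω : Type*} [MeasurableSpace Ω] {μ : Measure Ω}
    [IsFiniteMeasure μ] {g : ℝ → ℝ} (hg : Continuous g) {X : Ω → ℝ} (hX : Measurable X) {C : ℝ}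
    (hXb : ∀ ω, |X ω| ≤ C) : Integrable (fun ω => g (X ω)) μ := by
  obtain ⟨K, hK⟩ :=
    (isCompact_Icc (a := -C) (b := C)).exists_bound_of_continuousOn hg.continuousOn
  exact .of_bound (hg.measurable.comp hX).aestronglyMeasurable K
    (ae_of_all _ fun ω => hK _ (abs_le.mp (hXb ω)))

theorem oce_attained_general {Ω : Type*} [MeasurableSpace Ω] (μ : Measure Ω)
    [IsProbabilityMeasure μ]
    (l : ℝ → ℝ) (hconv : ConvexOn ℝ Set.univ l) (h0 : l 0 = 0)
    (hC : ∃ M : ℝ, ∀ x : ℝ, M ≤ |x| → x < l x)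
    (X : Ω → ℝ) (hX : Measurable X) (C : ℝ) (hXb : ∀ ω, |X ω| ≤ C) :
    ∃ a b r₀ : ℝ, r₀ ∈ Set.Icc a b ∧
      ∀ r : ℝ, (∫ ω, l (X ω - r₀) ∂μ) + r₀ ≤ (∫ ω, l (X ω - r) ∂μ) + r := by
  have hl : Continuous l := continuousOn_univ.mp (hconv.continuousOn isOpen_univ)
  have hint : ∀ r, Integrable (fun ω => l (X ω - r)) μ := fun r =>
    integrable_comp_of_abs_le (hl.comp (continuous_sub_right r)) hX hXb
  have hXint : Integrable X μ := integrable_comp_of_abs_le continuous_id hX hXb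
  set F : ℝ → ℝ := fun r => (∫ ω, l (X ω - r) ∂μ) + r
  have hF_conv : ConvexOn ℝ univ F :=
    (integral_convexOn_of_integrand_ae convex_univ
      (ae_of_all _ fun ω => hconv.comp_const_sub (X ω)) fun r _ => hint r).add
      (convexOn_id convex_univ)
  have hF_ge : ∀ r, l ((∫ ω, X ω ∂μ) - r) - ((∫ ω, X ω ∂μ) - r) + ∫ ω, X ω ∂μ ≤ F r := by
    intro r
    have hjensen := hconv.map_integral_le hl.continuousOn isClosed_univ
      (ae_of_all _ fun ω => mem_univ (X ω - r)) (hXint.sub (integrable_const r)) (hint r)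
    rw [integral_sub hXint (integrable_const r), integral_const, probReal_univ, one_smul]
      at hjensen
    simp only [F]
    linarith
  have hF_tendsto : Tendsto F (cocompact ℝ) atTop := by
    refine tendsto_atTop_mono hF_ge (tendsto_atTop_add_const_right _ _ ?_)
    exact (hconv.tendsto_sub_self_cocompact_atTop h0 hC).comp
      (Homeomorph.subLeft (∫ ω, X ω ∂μ)).isClosedEmbedding.tendsto_cocompact
  obtain ⟨r₀, hr₀⟩ := (continuousOn_univ.mp (hF_conv.continuousOn isOpen_univ)).exists_forall_le
    hF_tendsto
  exact ⟨r₀, r₀, r₀, left_mem_Icc.2 le_rfl, hr₀⟩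

/-- Under the coercivity condition `l(x) > x` for all large `|x|`, the infimum
defining the OCE of a bounded random variable is attained at some point of a
compact interval. -/
theorem oce_attained {Ω : Type*} [MeasurableSpace Ω] (μ : Measure Ω)
    [IsProbabilityMeasure μ]
    (l : ℝ → ℝ) (hconv : ConvexOn ℝ Set.univ l) (hmono : Monotone l) (h0 : l 0 = 0)
    (hC : ∃ M : ℝ, ∀ x : ℝ, M ≤ |x| → x < l x)
    (X : Ω → ℝ) (hX : Measurable X) (C : ℝ) (hXb : ∀ ω, |X ω| ≤ C) :
    ∃ a b r₀ : ℝ, r₀ ∈ Set.Icc a b ∧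
      ∀ r : ℝ, (∫ ω, l (X ω - r₀) ∂μ) + r₀ ≤ (∫ ω, l (X ω - r) ∂μ) + r :=
  oce_attained_general μ l hconv h0 hC X hX C hXb
end
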